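/- arXiv:2412.10249 — 2 statements merged into one kernel-verified Lean document; each statement's English description precedes it below -/
import Mathlib

section
/- SAGA gradient memory recursion bound: if g^{k+1}_i = B_i z^k when i = i_k and g^{k+1}_i = g^k_i otherwise, where i_k is sampled with probabilities p_i, then E_{i_k}[∑_i p_i⁻¹ ‖B_i z* − g^{k+1}_i‖²] = ∑_i p_i⁻¹ ‖B_i z* − g^k_i‖² + ∑_i ‖B_i(z^k − z*)‖² − ∑_i ‖B_i z* − g^k_i‖², which is at most L̄² ‖z^k − z*‖² + (1 − min_i p_i) ∑_i p_i⁻¹ ‖B_i z* − g^k_i‖². -/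
open Finset

section ProbabilityWeights

variable {ι : Type*} [Fintype ι]

lemma sum_ite_eq_sum_add_sub [DecidableEq ι] (a b : ι → ℝ) (j : ι) :
    ∑ i, (if i = j then b i else a i) = ∑ i, a i + (b j - a j) := by
  rw [← sum_erase_add _ _ (mem_univ j), ← sum_erase_add _ _ (mem_univ j), if_pos rfl,
    sum_congr rfl fun i hi => if_neg (ne_of_mem_erase hi)]
  ring

/-- The importance weight `(p j)⁻¹` cancels the probability `p j` of updating coordinate `j`. -/
lemma sum_mul_sum_inv_mul_ite [DecidableEq ι] (p a b : ι → ℝ) (hp : ∀ i, p i ≠ 0)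
    (hsum : ∑ i, p i = 1) :
    ∑ j, p j * ∑ i, (p i)⁻¹ * (if i = j then b i else a i) =
      ∑ i, (p i)⁻¹ * a i + ∑ i, b i - ∑ i, a i := by
  have inner (j : ι) : p j * ∑ i, (p i)⁻¹ * (if i = j then b i else a i) =
      p j * ∑ i, (p i)⁻¹ * a i + (b j - a j) := by
    simp only [mul_ite]
    rw [sum_ite_eq_sum_add_sub, mul_add, ← mul_sub, ← mul_assoc, mul_inv_cancel₀ (hp j), one_mul]
  simp only [inner, sum_add_distrib, ← sum_mul, hsum, one_mul, sum_sub_distrib]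
  ring

lemma iInf_mul_sum_inv_mul_le_sum (p a : ι → ℝ) (hp : ∀ i, 0 < p i) (ha : ∀ i, 0 ≤ a i) :
    (⨅ i, p i) * ∑ i, (p i)⁻¹ * a i ≤ ∑ i, a i := by
  rw [mul_sum]
  refine sum_le_sum fun i _ => ?_
  calc (⨅ i, p i) * ((p i)⁻¹ * a i) = (⨅ i, p i) / p i * a i := by ring
    _ ≤ 1 * a i := by
      gcongr
      · exact ha i
      · exact div_le_one_of_le₀ (ciInf_le (Set.finite_range p).bddBelow i) (hp i).le
    _ = a i := one_mul _

end ProbabilityWeights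

theorem saga_memory_recursion_general
    {Z : Type*} [NormedAddCommGroup Z] [InnerProductSpace ℝ Z]
    {n : ℕ} (B : Fin n → Z →L[ℝ] Z) (zs zk : Z) (g : Fin n → Z)
    (p : Fin n → ℝ) (hp : ∀ i, 0 < p i ∧ p i ≤ 1) (hsum : ∑ i, p i = 1)
    (Lbarsq : ℝ) (hL : ∀ z : Z, ∑ i, ‖B i z‖ ^ 2 ≤ Lbarsq * ‖z‖ ^ 2) :
    (∑ j, p j * ∑ i, (p i)⁻¹ * ‖B i zs - (if i = j then B j zk else g i)‖ ^ 2) =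
        ∑ i, (p i)⁻¹ * ‖B i zs - g i‖ ^ 2 + ∑ i, ‖B i (zk - zs)‖ ^ 2 -
          ∑ i, ‖B i zs - g i‖ ^ 2 ∧
      (∑ j, p j * ∑ i, (p i)⁻¹ * ‖B i zs - (if i = j then B j zk else g i)‖ ^ 2) ≤
        Lbarsq * ‖zk - zs‖ ^ 2 + (1 - ⨅ i, p i) * ∑ i, (p i)⁻¹ * ‖B i zs - g i‖ ^ 2 := by
  have hnorm (i j : Fin n) : ‖B i zs - (if i = j then B j zk else g i)‖ ^ 2 =
      if i = j then ‖B i (zk - zs)‖ ^ 2 else ‖B i zs - g i‖ ^ 2 := by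
    split_ifs with h
    · rw [h, map_sub, norm_sub_rev]
    · rfl
  have expectation := sum_mul_sum_inv_mul_ite p (fun i => ‖B i zs - g i‖ ^ 2)
    (fun i => ‖B i (zk - zs)‖ ^ 2) (fun i => (hp i).1.ne') hsum
  simp only [← hnorm] at expectation
  refine ⟨expectation, expectation ▸ ?_⟩
  have contraction := iInf_mul_sum_inv_mul_le_sum p (fun i => ‖B i zs - g i‖ ^ 2)
    (fun i => (hp i).1) (fun i => by positivity)
  linarith [hL (zk - zs)]

/-- SAGA gradient-memory recursion: with `g^{k+1}_i = B_i z^k` if `i = i_k`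
and `g^{k+1}_i = g^k_i` otherwise, `i_k` sampled with probabilities `p_i`,
the expectation of `∑_i p_i⁻¹ ‖B_i z* − g^{k+1}_i‖²` equals
`∑_i p_i⁻¹ ‖B_i z* − g^k_i‖² + ∑_i ‖B_i(z^k − z*)‖² − ∑_i ‖B_i z* − g^k_i‖²`,
which is at most `L̄² ‖z^k − z*‖² + (1 − min_i p_i) ∑_i p_i⁻¹ ‖B_i z* − g^k_i‖²`. -/
theorem saga_memory_recursion
    {Z : Type*} [NormedAddCommGroup Z] [InnerProductSpace ℝ Z]
    {n : ℕ} [NeZero n] (B : Fin n → Z →L[ℝ] Z) (zs zk : Z) (g : Fin n → Z)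
    (p : Fin n → ℝ) (hp : ∀ i, 0 < p i ∧ p i ≤ 1) (hsum : ∑ i, p i = 1)
    (Lbarsq : ℝ) (hL : ∀ z : Z, ∑ i, ‖B i z‖ ^ 2 ≤ Lbarsq * ‖z‖ ^ 2) :
    (∑ j, p j * ∑ i, (p i)⁻¹ * ‖B i zs - (if i = j then B j zk else g i)‖ ^ 2) =
        ∑ i, (p i)⁻¹ * ‖B i zs - g i‖ ^ 2 + ∑ i, ‖B i (zk - zs)‖ ^ 2 -
          ∑ i, ‖B i zs - g i‖ ^ 2 ∧
      (∑ j, p j * ∑ i, (p i)⁻¹ * ‖B i zs - (if i = j then B j zk else g i)‖ ^ 2) ≤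
        Lbarsq * ‖zk - zs‖ ^ 2 + (1 - ⨅ i, p i) * ∑ i, (p i)⁻¹ * ‖B i zs - g i‖ ^ 2 :=
  saga_memory_recursion_general B zs zk g p hp hsum Lbarsq hL
end

section
/- Second-moment bound for the SAGA estimator: E_{i_k}‖f_{i_k} − E f‖² ≤ (1+a) L̄_p² ‖z − z*‖² + (1 + a⁻¹) ∑_i p_i⁻¹ ‖B_i z* − g_i‖² for any a > 0, where f_i = p_i⁻¹(B_i z − g_i) and L̄_p² = sup_{‖w‖≤1} ∑_i p_i⁻¹ ‖B_i w‖². -/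
/-- Second-moment bound for the SAGA estimator: with
`f_i = p_i⁻¹ (B_i z − g_i)`, `E f = ∑_i p_i f_i`, and
`L̄_p² = sup_{‖w‖≤1} ∑_i p_i⁻¹ ‖B_i w‖²`, for any `a > 0`,
`E‖f − E f‖² ≤ (1+a) L̄_p² ‖z − z*‖² + (1 + a⁻¹) ∑_i p_i⁻¹ ‖B_i z* − g_i‖²`. -/
theorem saga_estimator_second_moment
    {Z : Type*} [NormedAddCommGroup Z] [InnerProductSpace ℝ Z]
    {n : ℕ} (B : Fin n → Z →L[ℝ] Z) (z zs : Z) (g : Fin n → Z)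
    (p : Fin n → ℝ) (hp : ∀ i, 0 < p i ∧ p i ≤ 1) (hsum : ∑ i, p i = 1)
    (Lpsq : ℝ) (hLp : ∀ w : Z, ∑ i, (p i)⁻¹ * ‖B i w‖ ^ 2 ≤ Lpsq * ‖w‖ ^ 2)
    (a : ℝ) (ha : 0 < a) :
    ∑ i, p i *
        ‖(p i)⁻¹ • (B i z - g i) - ∑ j, p j • ((p j)⁻¹ • (B j z - g j))‖ ^ 2 ≤
      (1 + a) * Lpsq * ‖z - zs‖ ^ 2 +
        (1 + a⁻¹) * ∑ i, (p i)⁻¹ * ‖B i zs - g i‖ ^ 2 := by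
  set f : Fin n → Z := fun i => (p i)⁻¹ • (B i z - g i) with hf
  set m : Z := ∑ j, p j • f j with hm
  -- Step 1: variance ≤ second moment
  have step1 : ∑ i, p i * ‖f i - m‖ ^ 2 ≤ ∑ i, p i * ‖f i‖ ^ 2 := by
    have expand : ∀ i, p i * ‖f i - m‖ ^ 2
        = p i * ‖f i‖ ^ 2 - 2 * p i * (inner ℝ (f i) m : ℝ) + p i * ‖m‖ ^ 2 := by
      intro i
      rw [@norm_sub_sq_real Z _ _ (f i) m]
      ring
    rw [Finset.sum_congr rfl (fun i _ => expand i)]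
    rw [Finset.sum_add_distrib, Finset.sum_sub_distrib]
    have h1 : ∑ i, 2 * p i * (inner ℝ (f i) m : ℝ) = 2 * ‖m‖ ^ 2 := by
      have e : ∀ i, 2 * p i * (inner ℝ (f i) m : ℝ) = 2 * (inner ℝ (p i • f i) m : ℝ) := by
        intro i; simp only [hf, real_inner_smul_left]; ring
      rw [Finset.sum_congr rfl (fun i _ => e i), ← Finset.mul_sum, ← sum_inner, ← hm,
        real_inner_self_eq_norm_sq]
    have h2 : ∑ i : Fin n, p i * ‖m‖ ^ 2 = ‖m‖ ^ 2 := by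
      rw [← Finset.sum_mul, hsum, one_mul]
    rw [h1, h2]
    nlinarith [sq_nonneg ‖m‖]
  refine step1.trans ?_
  -- Step 2: rewrite second moment
  have step2 : ∀ i, p i * ‖f i‖ ^ 2 = (p i)⁻¹ * ‖B i z - g i‖ ^ 2 := by
    intro i
    obtain ⟨hpi, -⟩ := hp i
    rw [hf]
    simp only [norm_smul, Real.norm_eq_abs, abs_of_pos (inv_pos.mpr hpi), mul_pow]
    field_simp
  rw [Finset.sum_congr rfl (fun i _ => step2 i)]
  -- Step 3: Young split
  have young : ∀ x y : Z, ‖x + y‖ ^ 2 ≤ (1 + a) * ‖x‖ ^ 2 + (1 + a⁻¹) * ‖y‖ ^ 2 := by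
    intro x y
    have h := norm_add_le x y
    have ha' : a * a⁻¹ = 1 := mul_inv_cancel₀ ha.ne'
    have hsq : ‖x + y‖ ^ 2 ≤ (‖x‖ + ‖y‖) ^ 2 := by nlinarith [norm_nonneg (x + y)]
    nlinarith [sq_nonneg (a * ‖x‖ - ‖y‖), hsq, ha, mul_pos ha ha]
  have step3 : ∀ i, (p i)⁻¹ * ‖B i z - g i‖ ^ 2
      ≤ (1 + a) * ((p i)⁻¹ * ‖B i (z - zs)‖ ^ 2)
        + (1 + a⁻¹) * ((p i)⁻¹ * ‖B i zs - g i‖ ^ 2) := by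
    intro i
    obtain ⟨hpi, -⟩ := hp i
    have hdecomp : B i z - g i = B i (z - zs) + (B i zs - g i) := by
      rw [map_sub]; abel
    have := young (B i (z - zs)) (B i zs - g i)
    rw [hdecomp]
    have hinv : (0:ℝ) ≤ (p i)⁻¹ := (inv_pos.mpr hpi).le
    nlinarith [mul_le_mul_of_nonneg_left this hinv]
  calc ∑ i, (p i)⁻¹ * ‖B i z - g i‖ ^ 2
      ≤ ∑ i, ((1 + a) * ((p i)⁻¹ * ‖B i (z - zs)‖ ^ 2)
          + (1 + a⁻¹) * ((p i)⁻¹ * ‖B i zs - g i‖ ^ 2)) :=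
        Finset.sum_le_sum fun i _ => step3 i
    _ = (1 + a) * ∑ i, (p i)⁻¹ * ‖B i (z - zs)‖ ^ 2
          + (1 + a⁻¹) * ∑ i, (p i)⁻¹ * ‖B i zs - g i‖ ^ 2 := by
        rw [Finset.sum_add_distrib, Finset.mul_sum, Finset.mul_sum]
    _ ≤ (1 + a) * Lpsq * ‖z - zs‖ ^ 2 + (1 + a⁻¹) * ∑ i, (p i)⁻¹ * ‖B i zs - g i‖ ^ 2 := by
        have h1a : (0:ℝ) ≤ 1 + a := by linarith
        have := mul_le_mul_of_nonneg_left (hLp (z - zs)) h1a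
        linarith [this]
end
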